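/- arXiv:2507.14530 — 4 statements merged into one kernel-verified Lean document; each statement's English description precedes it below -/
import Mathlib

section
/- Let f: Γ → Γ' be a morphism of graphs and let (X,p,Γ') be an F-graph bundle. If the image f(Γ) is a tree, then the pullback f^*(X,p,Γ') is a trivial F-graph bundle. -/
open Classical Matrix Kronecker

universe u

noncomputable section

/-- A morphism of graphs: adjacent vertices are mapped to adjacent or equal vertices. -/
def IsGraphMorphism {V W : Type*} (G : SimpleGraph V) (H : SimpleGraph W) (f : V → W) : Prop :=
  ∀ ⦃a b : V⦄, G.Adj a b → H.Adj (f a) (f b) ∨ f a = f b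

/-- The graph `X̃` obtained from `X` by deleting the edges lying inside fibers of `p`. -/
def delFiberEdges {VX VB : Type*} (X : SimpleGraph VX) (p : VX → VB) : SimpleGraph VX where
  Adj a b := X.Adj a b ∧ p a ≠ p b
  symm := by
    constructor
    intro a b h
    exact ⟨h.1.symm, Ne.symm h.2⟩
  loopless := by
    constructor
    intro a h
    exact X.loopless.irrefl a h.1

/-- `(X, p, B)` is an `F`-graph bundle. -/
structure IsGraphBundle {VF VX VB : Type*} (F : SimpleGraph VF) (X : SimpleGraph VX)
    (p : VX → VB) (B : SimpleGraph VB) : Prop where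
  morphism : IsGraphMorphism X B p
  surj : Function.Surjective p
  fiber_iso : ∀ v : VB, Nonempty ((X.induce (p ⁻¹' {v})) ≃g F)
  fiber_card : ∀ v : VB, Nat.card (p ⁻¹' {v}) = Nat.card VF
  covering : ∀ x : VX,
    Set.BijOn p ((delFiberEdges X p).neighborSet x) (B.neighborSet (p x))
  transport : ∀ ⦃v w : VB⦄, B.Adj v w →
    ∃ ψ : (X.induce (p ⁻¹' {v})) ≃g (X.induce (p ⁻¹' {w})),
      ∀ x : (p ⁻¹' {v}), X.Adj x.1 (ψ x).1

/-- Vertices of the pullback graph. -/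
abbrev PullbackVert {VB VX VC : Type*} (f : VB → VC) (p : VX → VC) :=
  {a : VB × VX // f a.1 = p a.2}

/-- The total space of the pullback of the bundle `(X, p, C)` along `f : B → C`. -/
def pullbackGraph {VB VX VC : Type*} (B : SimpleGraph VB) (X : SimpleGraph VX)
    (f : VB → VC) (p : VX → VC) (C : SimpleGraph VC) :
    SimpleGraph (PullbackVert f p) where
  Adj a b :=
    (a.1.1 = b.1.1 ∧ X.Adj a.1.2 b.1.2) ∨
    (B.Adj a.1.1 b.1.1 ∧ f a.1.1 = f b.1.1 ∧ a.1.2 = b.1.2) ∨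
    (B.Adj a.1.1 b.1.1 ∧ C.Adj (f a.1.1) (f b.1.1) ∧ X.Adj a.1.2 b.1.2)
  symm := by
    constructor
    rintro a b (⟨h1, h2⟩ | ⟨h1, h2, h3⟩ | ⟨h1, h2, h3⟩)
    · exact Or.inl ⟨h1.symm, h2.symm⟩
    · exact Or.inr (Or.inl ⟨h1.symm, h2.symm, h3.symm⟩)
    · exact Or.inr (Or.inr ⟨h1.symm, h2.symm, h3.symm⟩)
  loopless := by
    constructor
    rintro a (⟨_, h⟩ | ⟨h, _⟩ | ⟨h, _⟩)
    · exact X.loopless.irrefl _ h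
    · exact B.loopless.irrefl _ h
    · exact B.loopless.irrefl _ h

/-- The projection of the pullback bundle. -/
def pullbackProj {VB VX VC : Type*} (f : VB → VC) (p : VX → VC) :
    PullbackVert f p → VB := fun a => a.1.1

/-- Two graph bundles over the same base are equivalent. -/
def BundlesEquiv {VX VY VB : Type*} (X : SimpleGraph VX) (p : VX → VB)
    (Y : SimpleGraph VY) (q : VY → VB) : Prop :=
  ∃ Φ : X ≃g Y, ∀ x, q (Φ x) = p x

/-- A graph bundle is trivial if it is equivalent to `(B □ F, π, B)` with `π (v, f) = v`. -/
def IsTrivialBundle {VF VX VB : Type*} (F : SimpleGraph VF) (X : SimpleGraph VX)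
    (p : VX → VB) (B : SimpleGraph VB) : Prop :=
  ∃ Φ : X ≃g (B.boxProd F), ∀ x, (Φ x).1 = p x

/-- An `F`-voltage function on `B`. -/
structure VoltageFunction {VB VF : Type*} (B : SimpleGraph VB) (F : SimpleGraph VF) where
  volt : VB → VB → (F ≃g F)
  volt_symm : ∀ v w, volt w v = (volt v w).symm

/-- The graph `B ×_φ F` associated with a voltage function. -/
def voltageGraph {VB VF : Type*} (B : SimpleGraph VB) (F : SimpleGraph VF)
    (φ : VoltageFunction B F) : SimpleGraph (VB × VF) where
  Adj a b := (B.Adj a.1 b.1 ∧ b.2 = φ.volt a.1 b.1 a.2) ∨ (a.1 = b.1 ∧ F.Adj a.2 b.2)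
  symm := by
    constructor
    rintro a b (⟨h1, h2⟩ | ⟨h1, h2⟩)
    · refine Or.inl ⟨h1.symm, ?_⟩
      rw [φ.volt_symm, h2, RelIso.symm_apply_apply]
    · exact Or.inr ⟨h1.symm, h2.symm⟩
  loopless := by
    constructor
    rintro a (⟨h, _⟩ | ⟨_, h⟩)
    · exact B.loopless.irrefl _ h
    · exact F.loopless.irrefl _ h

/-- The pullback of a voltage function along a graph morphism. -/
def pullbackVoltage {VB VC VF : Type*} (B : SimpleGraph VB) (C : SimpleGraph VC)
    (F : SimpleGraph VF) (f : VB → VC) (φ : VoltageFunction C F) : VoltageFunction B F where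
  volt v w := if f v = f w then RelIso.refl _ else φ.volt (f v) (f w)
  volt_symm v w := by
    by_cases h : f v = f w
    · rw [if_pos h, if_pos h.symm]
      rfl
    · rw [if_neg h, if_neg (fun hh : f w = f v => h hh.symm), φ.volt_symm]
/-- Adjacency matrix (over `ℝ`). -/
def adjMat {V : Type*} (G : SimpleGraph V) : Matrix V V ℝ :=
  Matrix.of fun a b => if G.Adj a b then 1 else 0

/-- Permutation matrix of an automorphism of `F`. -/
def permMat {VF : Type*} {F : SimpleGraph VF} (ψ : F ≃g F) : Matrix VF VF ℝ :=
  Matrix.of fun a b => if b = ψ a then 1 else 0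

/-- The matrix `M_f` of a map of vertex sets. -/
def morMat {VB VC : Type*} (f : VB → VC) : Matrix VC VB ℝ :=
  Matrix.of fun c b => if f b = c then 1 else 0

/-- The matrix `A_B(ψ)` of a voltage function. -/
def voltMat {VB VF : Type*} {B : SimpleGraph VB} {F : SimpleGraph VF}
    (φ : VoltageFunction B F) (ψ : F ≃g F) : Matrix VB VB ℝ :=
  Matrix.of fun v w => if B.Adj v w ∧ φ.volt v w = ψ then 1 else 0

instance instFiniteGraphIso {VF : Type*} [Finite VF] (F : SimpleGraph VF) :
    Finite (F ≃g F) :=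
  Finite.of_injective (fun ψ => (ψ.toEquiv : VF ≃ VF)) (fun a b h => by
    cases a; cases b; simpa using h)

noncomputable instance instFintypeGraphIso {VF : Type*} [Finite VF] (F : SimpleGraph VF) :
    Fintype (F ≃g F) :=
  Fintype.ofFinite _

/-- The image graph `f(Γ)` of a graph morphism. -/
def imageGraph {VB VC : Type*} (B : SimpleGraph VB) (f : VB → VC) :
    SimpleGraph (Set.range f) where
  Adj a b := a.1 ≠ b.1 ∧ ∃ v w, B.Adj v w ∧ f v = a.1 ∧ f w = b.1
  symm := by
    constructor
    rintro a b ⟨hne, v, w, h, hv, hw⟩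
    exact ⟨hne.symm, w, v, h.symm, hw, hv⟩
  loopless := by
    constructor
    rintro a ⟨hne, -⟩
    exact hne rfl

/-- The Cayley graph of a group with respect to a set of generators. -/
def cayleyGraph {G : Type*} [Group G] (S : Set G) : SimpleGraph G :=
  SimpleGraph.fromRel (fun x y => ∃ s ∈ S, y = x * s)

/-- The subdirect product of two groups with amalgamated factor group `B`. -/
def subdirSubgroup {A₁ A₂ B : Type*} [Group A₁] [Group A₂] [Group B]
    (φ₁ : A₁ →* B) (φ₂ : A₂ →* B) : Subgroup (A₁ × A₂) where
  carrier := {a : A₁ × A₂ | φ₁ a.1 = φ₂ a.2}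
  one_mem' := by simp
  mul_mem' := by
    intro a b ha hb
    simp only [Set.mem_setOf_eq, Prod.fst_mul, Prod.snd_mul, _root_.map_mul] at *
    rw [ha, hb]
  inv_mem' := by
    intro a ha
    simp only [Set.mem_setOf_eq, Prod.fst_inv, Prod.snd_inv, _root_.map_inv] at *
    rw [ha]

/-!
The image `f(Γ)` is a tree in the base `Γ'`. Over an edge of the base, the edges of `X` between
the two fibers form the graph of a fiber isomorphism; on a tree these isomorphisms are
trivialized by transporting every fiber to a root fiber along the unique path. This gives
coordinates in `F` on `p⁻¹(f(Γ))` that are constant along those edges, and in them the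
pullback is `Γ □ F`: an edge of `Γ` collapsed by `f` lifts to the identity between equal fibers,
and any other edge lifts to exactly the edges of `X` between the corresponding fibers.
-/

namespace SimpleGraph

variable {V : Type*} {G : SimpleGraph V}

theorem IsAcyclic.path_eq_concat_or (hG : G.IsAcyclic) {r : V} (P : ∀ v, G.Path r v)
    {u v : V} (h : G.Adj u v) :
    (P v : G.Walk r v) = (P u : G.Walk r u).concat h ∨
      (P u : G.Walk r u) = (P v : G.Walk r v).concat h.symm := by
  have mem_support : ∀ {a b : V} (h : G.Adj a b),
      (P b : G.Walk r b) ≠ (P a : G.Walk r a).concat h → b ∈ (P a : G.Walk r a).support :=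
    fun h hne => by_contra fun hv =>
      hne (congrArg Subtype.val ((hG.subsingleton_path _ _).allEq (P _) ⟨_, (P _).2.concat hv h⟩))
  have length_lt : ∀ {a b : V}, a ≠ b → b ∈ (P a : G.Walk r a).support →
      (P b : G.Walk r b).length < (P a : G.Walk r a).length := fun {a b} hab hb => by
    have htake : (P a : G.Walk r a).takeUntil b hb = P b :=
      congrArg Subtype.val ((hG.subsingleton_path _ _).allEq ⟨_, (P a).2.takeUntil hb⟩ (P b))
    exact htake ▸ Walk.length_takeUntil_lt_length hb hab.symm
  -- Otherwise each of `u`, `v` lies on the root path of the other, and truncating there would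
  -- make each of the two paths strictly shorter than the other.
  by_contra! hne
  exact (length_lt h.ne (mem_support h hne.1)).asymm
    (length_lt h.ne.symm (mem_support h.symm hne.2))

variable {E : V → Type*} {H : ∀ v, SimpleGraph (E v)}

def Walk.transport (ψ : ∀ ⦃u v⦄, G.Adj u v → H u ≃g H v) :
    ∀ {u v : V}, G.Walk u v → H u ≃g H v
  | _, _, .nil => RelIso.refl _
  | _, _, .cons h w => (ψ h).trans (w.transport ψ)

theorem Walk.transport_concat (ψ : ∀ ⦃u v⦄, G.Adj u v → H u ≃g H v) {u v w : V}
    (q : G.Walk u v) (h : G.Adj v w) (x : E u) :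
    (q.concat h).transport ψ x = ψ h (q.transport ψ x) := by
  induction q with
  | nil => rfl
  | cons h' q ih => exact ih h _

theorem IsAcyclic.exists_iso_apply_eq (hG : G.IsAcyclic) (hconn : G.Preconnected)
    {W : Type*} {K : SimpleGraph W} (ψ : ∀ ⦃u v⦄, G.Adj u v → H u ≃g H v)
    (hψ : ∀ ⦃u v⦄ (h : G.Adj u v), ψ h.symm = (ψ h).symm) (r : V) (θr : H r ≃g K) :
    ∃ θ : ∀ v, H v ≃g K, ∀ ⦃u v⦄ (h : G.Adj u v) (x : E u), θ v (ψ h x) = θ u x := by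
  let P : ∀ v, G.Path r v := fun v => (hconn r v).some.toPath
  refine ⟨fun v => ((P v : G.Walk r v).transport ψ).symm.trans θr, fun u v h x => ?_⟩
  simp only [RelIso.trans_apply]
  congr 1
  rcases hG.path_eq_concat_or P h with hv | hu
  · rw [RelIso.symm_apply_eq, hv, Walk.transport_concat, RelIso.apply_symm_apply]
  · rw [eq_comm, RelIso.symm_apply_eq, hu, Walk.transport_concat, RelIso.apply_symm_apply, hψ h,
      RelIso.symm_apply_apply]

end SimpleGraph

section Bundle

open SimpleGraph

variable {VF VX VB VC : Type*} {F : SimpleGraph VF} {X : SimpleGraph VX} {B : SimpleGraph VB}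
  {C : SimpleGraph VC} {p : VX → VC} {f : VB → VC}

theorem IsGraphMorphism.adj_of_imageGraph_adj (hf : IsGraphMorphism B C f)
    {c c' : Set.range f} (h : (imageGraph B f).Adj c c') : C.Adj c c' := by
  obtain ⟨hne, v, w, hvw, hv, hw⟩ := h
  rw [← hv, ← hw] at hne ⊢
  exact (hf hvw).resolve_right hne

namespace IsGraphBundle

/-- The transport isomorphism accounts for all edges between the two fibers because `p` is
injective on the neighbours of a vertex outside its fiber. -/
theorem exists_fiberIso_adj_iff (hX : IsGraphBundle F X p C) {c c' : VC} (h : C.Adj c c') :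
    ∃ ψ : X.induce (p ⁻¹' {c}) ≃g X.induce (p ⁻¹' {c'}),
      ∀ x y, X.Adj x.1 y.1 ↔ ψ x = y := by
  obtain ⟨ψ, hψ⟩ := hX.transport h
  refine ⟨ψ, fun x y => ⟨fun hxy => ?_, fun hxy => hxy ▸ hψ x⟩⟩
  have hx : p x.1 = c := x.2
  have hy : p y.1 = c' := y.2
  have hψx : p (ψ x).1 = c' := (ψ x).2
  have hcc' : c ≠ c' := h.ne
  refine Subtype.ext ((hX.covering x.1).injOn ⟨hψ x, ?_⟩ ⟨hxy, ?_⟩ (hψx.trans hy.symm))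
  · rwa [hx, hψx]
  · rwa [hx, hy]

def edgeIso (hX : IsGraphBundle F X p C) {c c' : VC} (h : C.Adj c c') :
    X.induce (p ⁻¹' {c}) ≃g X.induce (p ⁻¹' {c'}) :=
  (hX.exists_fiberIso_adj_iff h).choose

theorem adj_iff_edgeIso_eq (hX : IsGraphBundle F X p C) {c c' : VC} (h : C.Adj c c')
    (x : p ⁻¹' {c}) (y : p ⁻¹' {c'}) : X.Adj x.1 y.1 ↔ hX.edgeIso h x = y :=
  (hX.exists_fiberIso_adj_iff h).choose_spec x y

theorem edgeIso_symm (hX : IsGraphBundle F X p C) {c c' : VC} (h : C.Adj c c') :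
    hX.edgeIso h.symm = (hX.edgeIso h).symm := by
  refine DFunLike.ext _ _ fun y => ?_
  rw [← hX.adj_iff_edgeIso_eq h.symm, X.adj_comm, hX.adj_iff_edgeIso_eq h,
    RelIso.apply_symm_apply]

end IsGraphBundle

def fiberCoord (θ : ∀ c, X.induce (p ⁻¹' {c}) ≃g F) (x : VX) : VF :=
  θ (p x) ⟨x, Set.mem_singleton (p x)⟩

section fiberCoord

variable (θ : ∀ c, X.induce (p ⁻¹' {c}) ≃g F)

theorem fiberCoord_coe {c : VC} (x : p ⁻¹' {c}) : fiberCoord θ x.1 = θ c x := by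
  obtain ⟨x, rfl⟩ := x
  rfl

theorem fiberCoord_eq_iff {x y : VX} (hxy : p x = p y) :
    fiberCoord θ x = fiberCoord θ y ↔ x = y := by
  rw [fiberCoord_coe θ (⟨y, hxy.symm⟩ : p ⁻¹' {p x}), fiberCoord, (θ _).injective.eq_iff,
    Subtype.ext_iff]

theorem adj_fiberCoord_iff {x y : VX} (hxy : p x = p y) :
    F.Adj (fiberCoord θ x) (fiberCoord θ y) ↔ X.Adj x y := by
  rw [fiberCoord_coe θ (⟨y, hxy.symm⟩ : p ⁻¹' {p x}), fiberCoord, (θ _).map_adj_iff, induce_adj]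

theorem exists_fiberCoord_eq (c : VC) (z : VF) : ∃ x, p x = c ∧ fiberCoord θ x = z :=
  ⟨((θ c).symm z).1, ((θ c).symm z).2, by rw [fiberCoord_coe, RelIso.apply_symm_apply]⟩

end fiberCoord

theorem IsGraphBundle.exists_trivialization_of_isTree (hX : IsGraphBundle F X p C)
    {S : Set VC} {T : SimpleGraph S} (hTC : ∀ ⦃c c' : S⦄, T.Adj c c' → C.Adj c c')
    (hT : T.IsTree) :
    ∃ θ : ∀ c, X.induce (p ⁻¹' {c}) ≃g F, ∀ ⦃x y : VX⦄ (hx : p x ∈ S) (hy : p y ∈ S),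
      T.Adj ⟨p x, hx⟩ ⟨p y, hy⟩ → (X.Adj x y ↔ fiberCoord θ x = fiberCoord θ y) := by
  obtain ⟨r⟩ := hT.connected.nonempty
  obtain ⟨θS, hθS⟩ := hT.isAcyclic.exists_iso_apply_eq hT.connected.preconnected
    (H := fun c : S => X.induce (p ⁻¹' {c.1})) (fun _ _ h => hX.edgeIso (hTC h))
    (fun _ _ h => hX.edgeIso_symm (hTC h)) r (hX.fiber_iso r).some
  refine ⟨fun c => if hc : c ∈ S then θS ⟨c, hc⟩ else (hX.fiber_iso c).some,
    fun x y hx hy h => ?_⟩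
  rw [fiberCoord_coe _ (⟨x, rfl⟩ : p ⁻¹' {p x}), fiberCoord_coe _ (⟨y, rfl⟩ : p ⁻¹' {p y}),
    dif_pos hx, dif_pos hy, hX.adj_iff_edgeIso_eq (hTC h) ⟨x, rfl⟩ ⟨y, rfl⟩,
    ← (θS _).injective.eq_iff, hθS h, eq_comm]

/-- The trivialization is `(v, x) ↦ (v, fiberCoord θ x)`. -/
theorem isTrivialBundle_pullbackGraph (hf : IsGraphMorphism B C f)
    (θ : ∀ c, X.induce (p ⁻¹' {c}) ≃g F)
    (hθ : ∀ ⦃x y : VX⦄ (hx : p x ∈ Set.range f) (hy : p y ∈ Set.range f),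
      (imageGraph B f).Adj ⟨p x, hx⟩ ⟨p y, hy⟩ → (X.Adj x y ↔ fiberCoord θ x = fiberCoord θ y)) :
    IsTrivialBundle F (pullbackGraph B X f p C) (pullbackProj f p) B := by
  let Φ : PullbackVert f p → VB × VF := fun a => (a.1.1, fiberCoord θ a.1.2)
  have hΦ : Function.Bijective Φ := by
    constructor
    · rintro ⟨⟨v, x⟩, hx⟩ ⟨⟨w, y⟩, hy⟩ h
      obtain ⟨rfl, hxy⟩ := Prod.ext_iff.mp h
      obtain rfl := (fiberCoord_eq_iff θ (hx.symm.trans hy)).mp hxy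
      rfl
    · rintro ⟨v, z⟩
      obtain ⟨x, hx, rfl⟩ := exists_fiberCoord_eq θ (f v) z
      exact ⟨⟨(v, x), hx.symm⟩, rfl⟩
  refine ⟨⟨Equiv.ofBijective Φ hΦ, ?_⟩, fun _ => rfl⟩
  rintro ⟨⟨v, x⟩, hx : f v = p x⟩ ⟨⟨w, y⟩, hy : f w = p y⟩
  have hcross : B.Adj v w → f v ≠ f w → (X.Adj x y ↔ fiberCoord θ x = fiberCoord θ y) :=
    fun hvw hne => hθ ⟨v, hx⟩ ⟨w, hy⟩ ⟨fun h => hne (hx.trans (h.trans hy.symm)), v, w, hvw, hx, hy⟩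
  change (B.Adj v w ∧ fiberCoord θ x = fiberCoord θ y ∨
      F.Adj (fiberCoord θ x) (fiberCoord θ y) ∧ v = w) ↔
    (v = w ∧ X.Adj x y) ∨ (B.Adj v w ∧ f v = f w ∧ x = y) ∨
      (B.Adj v w ∧ C.Adj (f v) (f w) ∧ X.Adj x y)
  constructor
  · rintro (⟨hvw, hxy⟩ | ⟨hxy, rfl⟩)
    · by_cases hfvw : f v = f w
      · have hxy := (fiberCoord_eq_iff θ (hx.symm.trans (hfvw.trans hy))).mp hxy
        exact .inr (.inl ⟨hvw, hfvw, hxy⟩)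
      · exact .inr (.inr ⟨hvw, (hf hvw).resolve_right hfvw, (hcross hvw hfvw).mpr hxy⟩)
    · exact .inl ⟨rfl, (adj_fiberCoord_iff θ (hx.symm.trans hy)).mp hxy⟩
  · rintro (⟨rfl, hxy⟩ | ⟨hvw, -, rfl⟩ | ⟨hvw, hC, hxy⟩)
    · exact .inr ⟨(adj_fiberCoord_iff θ (hx.symm.trans hy)).mpr hxy, rfl⟩
    · exact .inl ⟨hvw, rfl⟩
    · exact .inl ⟨hvw, (hcross hvw hC.ne).mp hxy⟩

end Bundle

theorem pullback_tree_trivial_general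
    {VF VX VB VC : Type*}
    (F : SimpleGraph VF) (X : SimpleGraph VX) (C : SimpleGraph VC) (B : SimpleGraph VB)
    (p : VX → VC) (f : VB → VC)
    (hf : IsGraphMorphism B C f) (hX : IsGraphBundle F X p C)
    (htree : (imageGraph B f).IsTree) :
    IsTrivialBundle F (pullbackGraph B X f p C) (pullbackProj f p) B := by
  obtain ⟨θ, hθ⟩ := hX.exists_trivialization_of_isTree (fun _ _ => hf.adj_of_imageGraph_adj) htree
  exact isTrivialBundle_pullbackGraph hf θ hθ

/-- if the image `f(Γ)` is a tree, then the pullback bundle is trivial. -/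
theorem pullback_tree_trivial
    {VF VX VB VC : Type*} [Fintype VF] [Fintype VX] [Fintype VB] [Fintype VC]
    (F : SimpleGraph VF) (X : SimpleGraph VX) (C : SimpleGraph VC) (B : SimpleGraph VB)
    (p : VX → VC) (f : VB → VC)
    (hf : IsGraphMorphism B C f) (hX : IsGraphBundle F X p C)
    (htree : (imageGraph B f).IsTree) :
    IsTrivialBundle F (pullbackGraph B X f p C) (pullbackProj f p) B :=
  pullback_tree_trivial_general F X C B p f hf hX htree
end
end

section
/- For i = 1,2 let φᵢ be an Fᵢ-voltage function on Γ and let (Xᵢ,pᵢ,Γ) be the Fᵢ-graph bundle with Xᵢ = Γ ×_{φᵢ} Fᵢ and pᵢ(v,f) = v. Then, with respect to fixed vertex orders and lexicographical orders on products, the adjacency matrix of the total space of the subdirect product satisfies A_{X₁ ⊞ X₂} = Σ_{ψ¹ ∈ Aut(F₁)} Σ_{ψ² ∈ Aut(F₂)} A_Γ(ψ¹,ψ²) ⊗ perm(ψ¹) ⊗ perm(ψ²) + I_{|V_Γ|} ⊗ A_{F₁} ⊗ I_{|V_{F₂}|} + I_{|V_Γ|} ⊗ I_{|V_{F₁}|}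 ⊗ A_{F₂}, where A_Γ(ψ¹,ψ²) is the matrix indexed by V_Γ whose (v,w)-entry is 1 if v ∼ w, φ₁(v,w) = ψ¹ and φ₂(v,w) = ψ², and 0 otherwise. -/
open Classical Matrix Kronecker

universe u

noncomputable section

/-!
Every matrix in the identity is the `0/1`-matrix of a relation on vertices: Kronecker products
correspond to conjunctions of relations, sums of matrices of pairwise exclusive relations to
disjunctions, and for each entry `(v, w)` the sum over `(ψ¹, ψ²)` collapses to the single term
`ψⁱ = φᵢ(v, w)`. So the identity reduces to the adjacency of `X₁ ⊞ X₂` on triples: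
`(v, f₁, f₂) ∼ (w, g₁, g₂)` iff `v ∼ w` and `gᵢ = φᵢ(v, w)(fᵢ)` for both `i`, or `v = w` and
exactly one fibre coordinate moves, along an edge of its fibre.
-/

def relMat {α β : Type*} (r : α → β → Prop) : Matrix α β ℝ :=
  Matrix.of fun a b => if r a b then 1 else 0

section relMat

variable {α β γ δ : Type*}

theorem adjMat_eq_relMat (G : SimpleGraph α) : adjMat G = relMat G.Adj := rfl

theorem permMat_eq_relMat {F : SimpleGraph α} (ψ : F ≃g F) :
    permMat ψ = relMat fun a b => b = ψ a := rfl

theorem of_ite_eq_relMat (r : α → β → Prop) [∀ a b, Decidable (r a b)] :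
    (Matrix.of fun a b => if r a b then (1 : ℝ) else 0) = relMat r := by
  ext a b
  simp only [relMat, Matrix.of_apply]
  congr

theorem one_eq_relMat [DecidableEq α] : (1 : Matrix α α ℝ) = relMat Eq :=
  of_ite_eq_relMat _

theorem relMat_congr {r s : α → β → Prop} (h : ∀ a b, r a b ↔ s a b) : relMat r = relMat s :=
  congrArg relMat (funext₂ fun a b => propext (h a b))

theorem relMat_or {r s : α → β → Prop} (h : ∀ a b, r a b → ¬ s a b) :
    relMat (fun a b => r a b ∨ s a b) = relMat r + relMat s := by
  ext a b
  by_cases hr : r a b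
  · simp [relMat, hr, h a b hr]
  · simp [relMat, hr]

theorem relMat_kronecker_relMat (r : α → β → Prop) (s : γ → δ → Prop) :
    relMat r ⊗ₖ relMat s = relMat fun (x : α × γ) (y : β × δ) => r x.1 y.1 ∧ s x.2 y.2 := by
  ext x y
  simp only [relMat, Matrix.kroneckerMap_apply, Matrix.of_apply, ite_zero_mul_ite_zero, mul_one]
  congr

theorem sum_relMat_kronecker {Ψ : Type*} [Fintype Ψ] (r : α → β → Prop) (σ : α → β → Ψ)
    (s : Ψ → γ → δ → Prop) :
    ∑ ψ, relMat (fun a b => r a b ∧ σ a b = ψ) ⊗ₖ relMat (s ψ) =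
      relMat fun (x : α × γ) (y : β × δ) => r x.1 y.1 ∧ s (σ x.1 y.1) x.2 y.2 := by
  ext x y
  simp only [Matrix.sum_apply, relMat, Matrix.kroneckerMap_apply, Matrix.of_apply]
  rw [Fintype.sum_eq_single (σ x.1 y.1) fun ψ hψ => by simp [Ne.symm hψ]]
  simp only [and_true, ite_zero_mul_ite_zero, mul_one]
  congr

end relMat

section subdirVoltage

variable {VB VF₁ VF₂ : Type*} {B : SimpleGraph VB} {F₁ : SimpleGraph VF₁}
  {F₂ : SimpleGraph VF₂} (φ₁ : VoltageFunction B F₁) (φ₂ : VoltageFunction B F₂)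

def subdirVoltageGraph : SimpleGraph (VB × VF₁ × VF₂) :=
  SimpleGraph.comap
    (fun t : VB × VF₁ × VF₂ =>
      (⟨((t.1, t.2.1), (t.1, t.2.2)), rfl⟩ :
        PullbackVert (Prod.fst : VB × VF₁ → VB) (Prod.fst : VB × VF₂ → VB)))
    (pullbackGraph (voltageGraph B F₁ φ₁) (voltageGraph B F₂ φ₂) Prod.fst Prod.fst B)

theorem subdirVoltageGraph_adj_iff (x y : VB × VF₁ × VF₂) :
    (subdirVoltageGraph φ₁ φ₂).Adj x y ↔
      ((B.Adj x.1 y.1 ∧ y.2.1 = φ₁.volt x.1 y.1 x.2.1 ∧ y.2.2 = φ₂.volt x.1 y.1 x.2.2) ∨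
        x.1 = y.1 ∧ F₁.Adj x.2.1 y.2.1 ∧ x.2.2 = y.2.2) ∨
        x.1 = y.1 ∧ x.2.1 = y.2.1 ∧ F₂.Adj x.2.2 y.2.2 := by
  obtain ⟨v, f₁, f₂⟩ := x
  obtain ⟨w, g₁, g₂⟩ := y
  simp only [subdirVoltageGraph, SimpleGraph.comap_adj, pullbackGraph, voltageGraph,
    Prod.mk.injEq]
  by_cases hvw : v = w
  · subst hvw
    simp only [B.loopless.irrefl v, true_and, false_and, false_or, and_false, or_false]
    tauto
  · simp only [hvw, false_and, or_false, false_or, and_false]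
    tauto

theorem sum_voltage_kronecker_permMat_eq_relMat [Fintype VF₁] [Fintype VF₂] [DecidableEq VF₁]
    [DecidableEq VF₂] :
    (∑ ψ₁ : F₁ ≃g F₁, ∑ ψ₂ : F₂ ≃g F₂,
        (Matrix.of fun v w =>
            if B.Adj v w ∧ φ₁.volt v w = ψ₁ ∧ φ₂.volt v w = ψ₂ then (1 : ℝ) else 0) ⊗ₖ
          (permMat ψ₁ ⊗ₖ permMat ψ₂)) =
      relMat fun x y : VB × VF₁ × VF₂ =>
        B.Adj x.1 y.1 ∧ y.2.1 = φ₁.volt x.1 y.1 x.2.1 ∧ y.2.2 = φ₂.volt x.1 y.1 x.2.2 := by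
  rw [← sum_relMat_kronecker _ (fun v w => (φ₁.volt v w, φ₂.volt v w))
    fun ψ (x y : VF₁ × VF₂) => y.1 = ψ.1 x.1 ∧ y.2 = ψ.2 x.2, Fintype.sum_prod_type]
  refine Finset.sum_congr rfl fun ψ₁ _ => Finset.sum_congr rfl fun ψ₂ _ => ?_
  rw [permMat_eq_relMat, permMat_eq_relMat, relMat_kronecker_relMat, of_ite_eq_relMat]
  simp only [Prod.mk.injEq]

end subdirVoltage

theorem adjMat_subdir_voltage_general
    {VB VF₁ VF₂ : Type*} [Fintype VF₁] [Fintype VF₂]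
    [DecidableEq VB] [DecidableEq VF₁] [DecidableEq VF₂]
    (B : SimpleGraph VB) (F₁ : SimpleGraph VF₁) (F₂ : SimpleGraph VF₂)
    (φ₁ : VoltageFunction B F₁) (φ₂ : VoltageFunction B F₂) :
    adjMat (SimpleGraph.comap
        (fun t : VB × VF₁ × VF₂ =>
          (⟨((t.1, t.2.1), (t.1, t.2.2)), rfl⟩ :
            PullbackVert (Prod.fst : VB × VF₁ → VB) (Prod.fst : VB × VF₂ → VB)))
        (pullbackGraph (voltageGraph B F₁ φ₁) (voltageGraph B F₂ φ₂)
          Prod.fst Prod.fst B)) =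
      (∑ ψ₁ : F₁ ≃g F₁, ∑ ψ₂ : F₂ ≃g F₂,
        (Matrix.of fun v w =>
            if B.Adj v w ∧ φ₁.volt v w = ψ₁ ∧ φ₂.volt v w = ψ₂ then (1 : ℝ) else 0) ⊗ₖ
          (permMat ψ₁ ⊗ₖ permMat ψ₂))
      + (1 : Matrix VB VB ℝ) ⊗ₖ (adjMat F₁ ⊗ₖ (1 : Matrix VF₂ VF₂ ℝ))
      + (1 : Matrix VB VB ℝ) ⊗ₖ ((1 : Matrix VF₁ VF₁ ℝ) ⊗ₖ adjMat F₂) := by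
  change adjMat (subdirVoltageGraph φ₁ φ₂) = _
  simp only [sum_voltage_kronecker_permMat_eq_relMat, adjMat_eq_relMat, one_eq_relMat,
    relMat_kronecker_relMat]
  rw [relMat_congr (subdirVoltageGraph_adj_iff φ₁ φ₂), relMat_or, relMat_or]
  · rintro x y ⟨hB, -⟩ ⟨hv, -⟩
    exact B.ne_of_adj hB hv
  · rintro x y (⟨hB, -⟩ | ⟨-, hF, -⟩) ⟨hv, hf, -⟩
    · exact B.ne_of_adj hB hv
    · exact F₁.ne_of_adj hF hf

/-- adjacency matrix of the total space of the subdirect product of two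
voltage-function bundles, on vertices identified with triples. -/
theorem adjMat_subdir_voltage
    {VB VF₁ VF₂ : Type*} [Fintype VB] [Fintype VF₁] [Fintype VF₂]
    [DecidableEq VB] [DecidableEq VF₁] [DecidableEq VF₂]
    (B : SimpleGraph VB) (F₁ : SimpleGraph VF₁) (F₂ : SimpleGraph VF₂)
    (φ₁ : VoltageFunction B F₁) (φ₂ : VoltageFunction B F₂) :
    adjMat (SimpleGraph.comap
        (fun t : VB × VF₁ × VF₂ =>
          (⟨((t.1, t.2.1), (t.1, t.2.2)), rfl⟩ :
            PullbackVert (Prod.fst : VB × VF₁ → VB) (Prod.fst : VB × VF₂ → VB)))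
        (pullbackGraph (voltageGraph B F₁ φ₁) (voltageGraph B F₂ φ₂)
          Prod.fst Prod.fst B)) =
      (∑ ψ₁ : F₁ ≃g F₁, ∑ ψ₂ : F₂ ≃g F₂,
        (Matrix.of fun v w =>
            if B.Adj v w ∧ φ₁.volt v w = ψ₁ ∧ φ₂.volt v w = ψ₂ then (1 : ℝ) else 0) ⊗ₖ
          (permMat ψ₁ ⊗ₖ permMat ψ₂))
      + (1 : Matrix VB VB ℝ) ⊗ₖ (adjMat F₁ ⊗ₖ (1 : Matrix VF₂ VF₂ ℝ))
      + (1 : Matrix VB VB ℝ) ⊗ₖ ((1 : Matrix VF₁ VF₁ ℝ) ⊗ₖ adjMat F₂) :=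
  adjMat_subdir_voltage_general B F₁ F₂ φ₁ φ₂
end
end

section
/- Let (X,p,Γ) be an F-graph bundle. Then the number of edges of the total space X equals the number of edges of the Cartesian product Γ □ F, namely |E_X| = |E_Γ|·|V_F| + |V_Γ|·|E_F|. In particular, any two F-graph bundles over the same base Γ have the same number of edges. -/
open Classical Matrix Kronecker

universe u

noncomputable section

/-!
By the handshake lemma it suffices to match degree sums. Choosing an isomorphism of each fiber
with `F` identifies the vertices of `X` with those of `B □ F`, and then a vertex `x` has as many
neighbours as its image: those outside its fiber correspond to the neighbours of `p x` by the
covering condition, those inside it to the neighbours of its image in `F`.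
-/

namespace SimpleGraph

variable {V W : Type*}

theorem ncard_neighborSet_eq_degree [Fintype V] (G : SimpleGraph V) [DecidableRel G.Adj]
    (v : V) : (G.neighborSet v).ncard = G.degree v := by
  rw [← Nat.card_coe_set_eq, Nat.card_eq_fintype_card, card_neighborSet_eq_degree]

theorem sum_ncard_neighborSet [Fintype V] (G : SimpleGraph V) :
    ∑ v, (G.neighborSet v).ncard = 2 * G.edgeSet.ncard := by
  classical
  simp only [ncard_neighborSet_eq_degree, sum_degrees_eq_twice_card_edges, ← coe_edgeFinset,
    Set.ncard_coe_finset]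

theorem ncard_edgeSet_eq_of_equiv [Fintype V] [Fintype W] {G : SimpleGraph V}
    {H : SimpleGraph W} (e : V ≃ W)
    (h : ∀ v, (G.neighborSet v).ncard = (H.neighborSet (e v)).ncard) :
    G.edgeSet.ncard = H.edgeSet.ncard := by
  have := Fintype.sum_equiv e (fun v => (G.neighborSet v).ncard)
    (fun w => (H.neighborSet w).ncard) h
  rw [sum_ncard_neighborSet, sum_ncard_neighborSet] at this
  omega

theorem Iso.ncard_neighborSet {G : SimpleGraph V} {H : SimpleGraph W} (f : G ≃g H) (v : V) :
    (H.neighborSet (f v)).ncard = (G.neighborSet v).ncard :=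
  Set.ncard_congr' (f.mapNeighborSet v).symm

theorem ncard_neighborSet_boxProd [Fintype V] [Fintype W] (G : SimpleGraph V)
    (H : SimpleGraph W) (x : V × W) :
    ((G.boxProd H).neighborSet x).ncard =
      (G.neighborSet x.1).ncard + (H.neighborSet x.2).ncard := by
  classical
  simp only [ncard_neighborSet_eq_degree, degree_boxProd]

theorem ncard_edgeSet_boxProd [Fintype V] [Fintype W] (G : SimpleGraph V) (H : SimpleGraph W) :
    (G.boxProd H).edgeSet.ncard =
      G.edgeSet.ncard * Fintype.card W + Fintype.card V * H.edgeSet.ncard := by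
  have := sum_ncard_neighborSet (G.boxProd H)
  simp only [ncard_neighborSet_boxProd, Finset.sum_add_distrib, Fintype.sum_prod_type,
    Finset.sum_const, Finset.card_univ, smul_eq_mul, ← Finset.mul_sum,
    sum_ncard_neighborSet] at this
  linarith

end SimpleGraph

theorem ncard_neighborSet_eq_delFiberEdges_add_induce {VX VB : Type*} [Finite VX]
    (X : SimpleGraph VX) (p : VX → VB) (x : VX) :
    (X.neighborSet x).ncard = ((delFiberEdges X p).neighborSet x).ncard +
      ((X.induce (p ⁻¹' {p x})).neighborSet ⟨x, rfl⟩).ncard := by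
  have hsplit : X.neighborSet x = (delFiberEdges X p).neighborSet x ∪
      Subtype.val '' (X.induce (p ⁻¹' {p x})).neighborSet ⟨x, rfl⟩ := by
    ext y
    by_cases hy : p x = p y <;> simp [delFiberEdges, hy, eq_comm]
  have hdisj : Disjoint ((delFiberEdges X p).neighborSet x)
      (Subtype.val '' (X.induce (p ⁻¹' {p x})).neighborSet ⟨x, rfl⟩) := by
    rw [Set.disjoint_left]
    rintro _ hdel ⟨y, -, rfl⟩
    exact hdel.2 y.2.symm
  rw [hsplit, Set.ncard_union_eq hdisj, Set.InjOn.ncard_image Subtype.val_injective.injOn]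

namespace IsGraphBundle

variable {VF VX VB : Type*} {F : SimpleGraph VF} {X : SimpleGraph VX} {p : VX → VB}
  {B : SimpleGraph VB}

def fiberIso (hX : IsGraphBundle F X p B) (v : VB) : X.induce (p ⁻¹' {v}) ≃g F :=
  (hX.fiber_iso v).some

def vertexEquiv (hX : IsGraphBundle F X p B) : VX ≃ VB × VF :=
  (Equiv.sigmaFiberEquiv p).symm.trans
    ((Equiv.sigmaCongrRight fun v => (hX.fiberIso v).toEquiv).trans (Equiv.sigmaEquivProd VB VF))

theorem vertexEquiv_apply (hX : IsGraphBundle F X p B) (x : VX) :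
    hX.vertexEquiv x = (p x, hX.fiberIso (p x) ⟨x, rfl⟩) := rfl

theorem ncard_neighborSet [Finite VX] [Fintype VB] [Fintype VF] (hX : IsGraphBundle F X p B)
    (x : VX) :
    (X.neighborSet x).ncard = ((B.boxProd F).neighborSet (hX.vertexEquiv x)).ncard := by
  rw [ncard_neighborSet_eq_delFiberEdges_add_induce X p x, SimpleGraph.ncard_neighborSet_boxProd,
    vertexEquiv_apply, (hX.covering x).ncard_eq, (hX.fiberIso (p x)).ncard_neighborSet]

theorem ncard_edgeSet [Fintype VX] [Fintype VB] [Fintype VF] (hX : IsGraphBundle F X p B) :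
    X.edgeSet.ncard = (B.boxProd F).edgeSet.ncard :=
  SimpleGraph.ncard_edgeSet_eq_of_equiv hX.vertexEquiv hX.ncard_neighborSet

end IsGraphBundle

/-- the total space of an `F`-graph bundle over `B` has as many edges as
`B □ F`, namely `|E_B|·|V_F| + |V_B|·|E_F|`; in particular any two `F`-graph bundles over
the same base have the same number of edges. -/
theorem bundle_edge_count {VF VX VB : Type u} [Fintype VF] [Fintype VX] [Fintype VB]
    (F : SimpleGraph VF) (X : SimpleGraph VX) (B : SimpleGraph VB) (p : VX → VB)
    (hX : IsGraphBundle F X p B) :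
    X.edgeSet.ncard = (B.boxProd F).edgeSet.ncard ∧
    X.edgeSet.ncard = B.edgeSet.ncard * Fintype.card VF + Fintype.card VB * F.edgeSet.ncard ∧
    ∀ {VY VZ : Type u} [Fintype VY] [Fintype VZ]
      (Y : SimpleGraph VY) (q : VY → VB) (Z : SimpleGraph VZ) (r : VZ → VB),
      IsGraphBundle F Y q B → IsGraphBundle F Z r B →
      Y.edgeSet.ncard = Z.edgeSet.ncard := by
  refine ⟨hX.ncard_edgeSet, hX.ncard_edgeSet.trans (SimpleGraph.ncard_edgeSet_boxProd B F), ?_⟩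
  intro VY VZ _ _ Y q Z r hY hZ
  rw [hY.ncard_edgeSet, hZ.ncard_edgeSet]
end
end

section
/- Let φ: A → B be a surjective homomorphism between finite groups and let S₁ be a symmetric generating set of B with 1_B ∉ S₁. Let S̃₁ be an S₁-transversal section of φ, let S₀ be an admissible symmetric generating set of ker(φ) with 1_A ∉ S₀, and set S_φ = S₀ ∪ S̃₁. Then the map φ: Cay(A,S_φ) → Cay(B,S₁) is a surjective morphism of graphs and the triple (Cay(A,S_φ), φ, Cay(B,S₁)) is a Cay(ker(φ),S₀)-graph bundle. -/
open Classical Matrix Kronecker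

universe u

noncomputable section

/-! An edge `x — x * u` of `Cay(A, S₀ ∪ T)` stays inside a fiber of `φ` when `u ∈ S₀ ⊆ ker φ` and
crosses to a neighbouring fiber when `u ∈ T`. Left translation by `a` identifies `Cay(ker φ, S₀)`
with the fiber through `a`; the `T`-edges at `x` are the translate `x • T`, which `φ` maps
bijectively onto the `S₁`-edges `φ x • S₁`; and right translation by `t ∈ T` moves a fiber onto
the adjacent one along `T`-edges, preserving the `S₀`-edges because `S₀` is invariant under
conjugation. -/

section CayleyGraph

variable {G H : Type*} [Group G] [Group H]

theorem cayleyGraph_adj {S : Set G} {x y : G} :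
    (cayleyGraph S).Adj x y ↔ x ≠ y ∧ (x⁻¹ * y ∈ S ∨ y⁻¹ * x ∈ S) := by
  have hrel : ∀ a b : G, (∃ s ∈ S, b = a * s) ↔ a⁻¹ * b ∈ S := fun a b =>
    ⟨fun ⟨s, hs, h⟩ => by simpa [h] using hs, fun h => ⟨_, h, by simp⟩⟩
  simp only [cayleyGraph, SimpleGraph.fromRel_adj, hrel]

theorem cayleyGraph_adj_of_inv_mem {S : Set G} (hS : ∀ s ∈ S, s⁻¹ ∈ S) {x y : G} :
    (cayleyGraph S).Adj x y ↔ x ≠ y ∧ x⁻¹ * y ∈ S := by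
  refine cayleyGraph_adj.trans (and_congr_right fun _ => or_iff_left_of_imp fun h => ?_)
  simpa using hS _ h

theorem cayleyGraph_adj_mul_of_mem {S : Set G} {s : G} (hs : s ∈ S) (hs₁ : s ≠ 1) (x : G) :
    (cayleyGraph S).Adj x (x * s) :=
  cayleyGraph_adj.2 ⟨by simpa using hs₁, .inl (by simpa using hs)⟩

theorem cayleyGraph_adj_mul_left {S : Set G} (g x y : G) :
    (cayleyGraph S).Adj (g * x) (g * y) ↔ (cayleyGraph S).Adj x y := by
  simp [cayleyGraph_adj, mul_assoc]

theorem cayleyGraph_adj_mul_right {S : Set G} (hS : ∀ a, ∀ s ∈ S, a * s * a⁻¹ ∈ S)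
    (x y t : G) : (cayleyGraph S).Adj (x * t) (y * t) ↔ (cayleyGraph S).Adj x y := by
  have hconj : ∀ u : G, t⁻¹ * u * t ∈ S ↔ u ∈ S := fun u =>
    ⟨fun h => by simpa [mul_assoc] using hS t _ h, fun h => by simpa using hS t⁻¹ u h⟩
  simp only [cayleyGraph_adj, ne_eq, mul_right_cancel_iff, _root_.mul_inv_rev,
    ← hconj (x⁻¹ * y), ← hconj (y⁻¹ * x), mul_assoc]

theorem cayleyGraph_subgroup_adj (K : Subgroup G) (S : Set G) (k k' : K) :
    (cayleyGraph {k : K | (k : G) ∈ S}).Adj k k' ↔ (cayleyGraph S).Adj k k' := by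
  simp only [cayleyGraph_adj, ne_eq, Subtype.ext_iff, Set.mem_ofPred_eq, Subgroup.coe_mul,
    Subgroup.coe_inv]

theorem neighborSet_cayleyGraph {S : Set G} (hS : ∀ s ∈ S, s⁻¹ ∈ S) (hS₁ : (1 : G) ∉ S)
    (x : G) : (cayleyGraph S).neighborSet x = (x * ·) '' S := by
  ext y
  simp only [SimpleGraph.mem_neighborSet, cayleyGraph_adj_of_inv_mem hS, Set.mem_image,
    ← eq_inv_mul_iff_mul_eq, exists_eq_right]
  refine and_iff_right_of_imp fun h hxy => hS₁ ?_
  simpa [hxy] using h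

theorem isGraphMorphism_cayleyGraph {S : Set G} {S' : Set H} (f : G →* H)
    (hf : ∀ s ∈ S, f s ∈ S' ∨ f s = 1) :
    IsGraphMorphism (cayleyGraph S) (cayleyGraph S') f := by
  intro x y hxy
  refine or_iff_not_imp_right.2 fun hne => cayleyGraph_adj.2 ⟨hne, ?_⟩
  have hne' : ∀ a b, f a ≠ f b → f (a⁻¹ * b) ≠ 1 := fun a b h => by
    simpa [inv_mul_eq_one] using h
  rcases (cayleyGraph_adj.1 hxy).2 with h | h
  · exact .inl (by simpa using (hf _ h).resolve_right (hne' x y hne))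
  · exact .inr (by simpa using (hf _ h).resolve_right (hne' y x (Ne.symm hne)))

end CayleyGraph

section Fibers

variable {G H : Type*} [Group G] [Group H] (φ : G →* H)

theorem inv_mem_of_bijOn {T : Set G} {S : Set H} (hT : ∀ t ∈ T, t⁻¹ ∈ T)
    (hTS : Set.BijOn φ T S) : ∀ s ∈ S, s⁻¹ ∈ S := by
  rw [← hTS.image_eq]
  rintro _ ⟨t, ht, rfl⟩
  exact ⟨t⁻¹, hT t ht, map_inv φ t⟩

theorem bijOn_image_mul_left {T : Set G} {S : Set H} (hTS : Set.BijOn φ T S) (x : G) :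
    Set.BijOn φ ((x * ·) '' T) ((φ x * ·) '' S) := by
  refine ⟨?_, ?_, ?_⟩
  · rintro _ ⟨t, ht, rfl⟩
    exact ⟨φ t, hTS.mapsTo ht, (map_mul φ x t).symm⟩
  · rintro _ ⟨t, ht, rfl⟩ _ ⟨t', ht', rfl⟩ h
    simp only [map_mul, mul_right_inj] at h
    rw [hTS.injOn ht ht' h]
  · rintro _ ⟨s, hs, rfl⟩
    obtain ⟨t, ht, rfl⟩ := hTS.surjOn hs
    exact ⟨x * t, ⟨t, ht, rfl⟩, map_mul φ x t⟩

theorem cayleyGraph_union_adj_of_map_eq {S T : Set G} (hT : ∀ t ∈ T, φ t ≠ 1) {x y : G}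
    (h : φ x = φ y) : (cayleyGraph (S ∪ T)).Adj x y ↔ (cayleyGraph S).Adj x y := by
  have hxy : x⁻¹ * y ∉ T := fun ht => hT _ ht (by simp [h])
  have hyx : y⁻¹ * x ∉ T := fun ht => hT _ ht (by simp [h])
  simp only [cayleyGraph_adj, Set.mem_union, or_iff_left hxy, or_iff_left hyx]

theorem delFiberEdges_cayleyGraph_union {S T : Set G} (hS : S ⊆ φ.ker)
    (hT : ∀ t ∈ T, φ t ≠ 1) : delFiberEdges (cayleyGraph (S ∪ T)) φ = cayleyGraph T := by
  have hS' : ∀ a b, a⁻¹ * b ∈ S → φ a = φ b := fun a b h => by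
    simpa [inv_mul_eq_one] using hS h
  have hT' : ∀ a b, a⁻¹ * b ∈ T → φ a ≠ φ b := fun a b h hab => hT _ h (by simp [hab])
  ext x y
  change (cayleyGraph (S ∪ T)).Adj x y ∧ φ x ≠ φ y ↔ _
  simp only [cayleyGraph_adj, Set.mem_union]
  grind

def cayleyGraphFiberIsoKer (S : Set G) (a : G) :
    (cayleyGraph S).induce (φ ⁻¹' {φ a}) ≃g cayleyGraph {k : φ.ker | (k : G) ∈ S} where
  toEquiv := φ.fiberEquivKer a
  map_rel_iff' {x y} := by
    rw [cayleyGraph_subgroup_adj, MonoidHom.fiberEquivKer_apply,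
      MonoidHom.fiberEquivKer_apply, cayleyGraph_adj_mul_left]
    rfl

def cayleyGraphFiberIsoMulRight {S T : Set G} (hS : ∀ a, ∀ s ∈ S, a * s * a⁻¹ ∈ S)
    (hT : ∀ t ∈ T, φ t ≠ 1) (v : H) (t : G) :
    (cayleyGraph (S ∪ T)).induce (φ ⁻¹' {v}) ≃g
      (cayleyGraph (S ∪ T)).induce (φ ⁻¹' {v * φ t}) where
  toEquiv := (Equiv.mulRight t).subtypeEquiv fun x => by simp
  map_rel_iff' {x y} := by
    have hxy : φ x = φ y := x.2.trans y.2.symm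
    change (cayleyGraph (S ∪ T)).Adj (x * t) (y * t) ↔ (cayleyGraph (S ∪ T)).Adj x y
    rw [cayleyGraph_union_adj_of_map_eq φ hT (by simp [hxy]),
      cayleyGraph_union_adj_of_map_eq φ hT hxy, cayleyGraph_adj_mul_right hS]

end Fibers

theorem cayley_graphBundle_general
    {A B : Type*} [Group A] [Group B]
    (φ : A →* B) (hsurj : Function.Surjective φ)
    (S₁ : Set B) (hS₁one : (1 : B) ∉ S₁)
    (T : Set A) (hTsym : ∀ s ∈ T, s⁻¹ ∈ T) (hT : Set.BijOn φ T S₁)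
    (S₀ : Set A) (hS₀sub : S₀ ⊆ (φ.ker : Set A))
    (hadm : ∀ (a : A), ∀ s ∈ S₀, a * s * a⁻¹ ∈ S₀) :
    IsGraphMorphism (cayleyGraph (S₀ ∪ T)) (cayleyGraph S₁) φ ∧
    Function.Surjective (φ : A → B) ∧
    IsGraphBundle (cayleyGraph {k : φ.ker | (k : A) ∈ S₀})
      (cayleyGraph (S₀ ∪ T)) (φ : A → B) (cayleyGraph S₁) := by
  have hT₁ : ∀ t ∈ T, φ t ≠ 1 := fun t ht h => hS₁one (h ▸ hT.mapsTo ht)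
  have hS₁sym := inv_mem_of_bijOn φ hTsym hT
  have hmor : IsGraphMorphism (cayleyGraph (S₀ ∪ T)) (cayleyGraph S₁) φ :=
    isGraphMorphism_cayleyGraph φ fun s hs =>
      hs.elim (fun h => .inr (hS₀sub h)) (fun h => .inl (hT.mapsTo h))
  have hker : {k : φ.ker | (k : A) ∈ S₀ ∪ T} = {k : φ.ker | (k : A) ∈ S₀} := by
    ext k
    exact or_iff_left fun h => hT₁ k h k.2
  refine ⟨hmor, hsurj, hmor, hsurj, fun v => ?_, fun v => ?_, fun x => ?_, fun v w hvw => ?_⟩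
  · obtain ⟨a, rfl⟩ := hsurj v
    exact ⟨hker ▸ cayleyGraphFiberIsoKer φ (S₀ ∪ T) a⟩
  · obtain ⟨a, rfl⟩ := hsurj v
    exact Nat.card_congr (φ.fiberEquivKer a)
  · rw [delFiberEdges_cayleyGraph_union φ hS₀sub hT₁, neighborSet_cayleyGraph hTsym
      (fun h => hT₁ 1 h (map_one φ)), neighborSet_cayleyGraph hS₁sym hS₁one]
    exact bijOn_image_mul_left φ hT x
  · obtain ⟨t, ht, hφt⟩ := hT.surjOn ((cayleyGraph_adj_of_inv_mem hS₁sym).1 hvw).2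
    obtain rfl : w = v * φ t := by simp [hφt]
    have ht₁ : t ≠ 1 := fun h => hT₁ t ht (h ▸ map_one φ)
    exact ⟨cayleyGraphFiberIsoMulRight φ hadm hT₁ v t,
      fun x => cayleyGraph_adj_mul_of_mem (Set.mem_union_right S₀ ht) ht₁ x.1⟩

/-- for a surjective homomorphism `φ : A → B` of finite groups and suitable
generating sets, `(Cay(A,S_φ), φ, Cay(B,S₁))` is a `Cay(ker φ, S₀)`-graph bundle. -/
theorem cayley_graphBundle
    {A B : Type*} [Group A] [Group B] [Fintype A] [Fintype B]
    (φ : A →* B) (hsurj : Function.Surjective φ)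
    (S₁ : Set B) (hS₁sym : ∀ s ∈ S₁, s⁻¹ ∈ S₁) (hS₁gen : Subgroup.closure S₁ = ⊤)
    (hS₁one : (1 : B) ∉ S₁)
    (T : Set A) (hTsym : ∀ s ∈ T, s⁻¹ ∈ T) (hT : Set.BijOn φ T S₁)
    (S₀ : Set A) (hS₀sym : ∀ s ∈ S₀, s⁻¹ ∈ S₀) (hS₀sub : S₀ ⊆ (φ.ker : Set A))
    (hS₀gen : Subgroup.closure S₀ = φ.ker) (hS₀one : (1 : A) ∉ S₀)
    (hadm : ∀ (a : A), ∀ s ∈ S₀, a * s * a⁻¹ ∈ S₀) :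
    IsGraphMorphism (cayleyGraph (S₀ ∪ T)) (cayleyGraph S₁) φ ∧
    Function.Surjective (φ : A → B) ∧
    IsGraphBundle (cayleyGraph {k : φ.ker | (k : A) ∈ S₀})
      (cayleyGraph (S₀ ∪ T)) (φ : A → B) (cayleyGraph S₁) :=
  cayley_graphBundle_general φ hsurj S₁ hS₁one T hTsym hT S₀ hS₀sub hadm
end
end
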